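/- arXiv:1412.8078 — 9 statements merged into one kernel-verified Lean document; each statement's English description precedes it below -/
import Mathlib

section
/- Let G be a finite simple graph. Then G is basic if and only if no connected component of G is bipartite (a connected component is bipartite if its vertex set can be partitioned into two parts such that every edge of the component joins a vertex of one part to a vertex of the other). -/
/-!
Let `M` be the vertex–edge incidence matrix of `G`. Basicness says that `x ↦ M x` is onto, which
by rank duality means that `y M = 0` forces `y = 0`. Now `y M = 0` says exactly that
`y u + y w = 0` along every edge, so `y` flips sign across each edge: if it is nonzero at one
vertex it is nonzero on that whole component, and its sign properly two-colours the component.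
Conversely, `±1` according to a two-colouring of a bipartite component, and `0` elsewhere, is a
nonzero solution.
-/

/-- A finite simple graph `G` is *basic* if for every assignment `b` of real numbers to
the vertices there exists an assignment `x` of real numbers to the edges such that for
each vertex the number at that vertex equals the sum of the numbers on its incident edges. -/
def GraphBasic {V : Type} [Fintype V] [DecidableEq V]
    (G : SimpleGraph V) [DecidableRel G.Adj] : Prop :=
  ∀ b : V → ℝ, ∃ x : G.edgeSet → ℝ,
    ∀ v : V, (∑ e : G.edgeSet, if v ∈ (e : Sym2 V) then x e else 0) = b v

/-- A connected component `C` of `G` is *bipartite* if the vertices of the component can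
be two-colored so that every edge of the component joins vertices of different colors. -/
def ComponentBipartite {V : Type} (G : SimpleGraph V) (C : G.ConnectedComponent) : Prop :=
  ∃ f : V → Bool, ∀ u w : V, G.connectedComponentMk u = C → G.Adj u w → f u ≠ f w

open Matrix

theorem Matrix.mulVec_surjective_iff_vecMul_injective {K m n : Type*} [Field K] [Fintype m]
    [Fintype n] {A : Matrix m n K} :
    Function.Surjective A.mulVec ↔ Function.Injective A.vecMul := by
  classical
  have h_surj : Function.Surjective A.mulVec ↔ A.rank = Fintype.card m := by
    rw [Matrix.rank, ← Module.finrank_fintype_fun_eq_card (R := K),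
      ← Submodule.eq_top_iff_finrank_eq, LinearMap.range_eq_top]
    rfl
  have h_inj : Function.Injective A.vecMul ↔ Aᵀ.rank = Fintype.card m := by
    have hdim := LinearMap.finrank_range_add_finrank_ker Aᵀ.mulVecLin
    rw [Module.finrank_fintype_fun_eq_card] at hdim
    have : A.vecMul = Aᵀ.mulVecLin := funext fun v => (Matrix.mulVec_transpose A v).symm
    rw [this, Matrix.rank, ← LinearMap.ker_eq_bot, ← Submodule.finrank_eq_zero]
    omega
  rw [h_surj, h_inj, Matrix.rank_transpose]

theorem Sym2.sum_ite_mem_mk {V M : Type*} [Fintype V] [DecidableEq V] [AddCommMonoid M]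
    {u w : V} (h : u ≠ w) (g : V → M) :
    (∑ v, if v ∈ s(u, w) then g v else 0) = g u + g w := by
  have : Finset.univ.filter (· ∈ s(u, w)) = {u, w} := by ext; simp
  rw [← Finset.sum_filter, this, Finset.sum_pair h]

namespace SimpleGraph

variable {V : Type} {R : Type*} (G : SimpleGraph V)

variable (R) in
def edgeIncMatrix [Zero R] [One R] [DecidableEq V] [DecidableRel G.Adj] :
    Matrix V G.edgeSet R :=
  (G.incMatrix R).submatrix id (↑)

def AlternatesOnEdges [Add R] [Zero R] (y : V → R) : Prop :=
  ∀ u w, G.Adj u w → y u + y w = 0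

variable {G}

theorem vecMul_edgeIncMatrix_eq_zero_iff [Fintype V] [DecidableEq V] [DecidableRel G.Adj]
    [Semiring R] {y : V → R} : y ᵥ* G.edgeIncMatrix R = 0 ↔ G.AlternatesOnEdges y := by
  have hentry (e : G.edgeSet) : (y ᵥ* G.edgeIncMatrix R) e
      = ∑ v, if v ∈ (e : Sym2 V) then y v else 0 := by
    simp [vecMul, dotProduct, edgeIncMatrix, incMatrix_apply', G.edge_mem_incidenceSet_iff]
  constructor
  · intro h u w huw
    have := congrFun h ⟨s(u, w), huw⟩
    rwa [Pi.zero_apply, hentry, Sym2.sum_ite_mem_mk huw.ne] at this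
  · intro hy
    ext ⟨e, he⟩
    induction e using Sym2.ind with
    | _ u w => rw [Pi.zero_apply, hentry, Sym2.sum_ite_mem_mk he.ne, hy u w he]

theorem graphBasic_iff_mulVec_edgeIncMatrix_surjective [Fintype V] [DecidableEq V]
    [DecidableRel G.Adj] :
    GraphBasic G ↔ Function.Surjective (G.edgeIncMatrix ℝ).mulVec := by
  have hentry (x : G.edgeSet → ℝ) (v : V) : (G.edgeIncMatrix ℝ *ᵥ x) v
      = ∑ e : G.edgeSet, if v ∈ (e : Sym2 V) then x e else 0 := by
    simp [mulVec, dotProduct, edgeIncMatrix, incMatrix_apply', G.edge_mem_incidenceSet_iff]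
  simp only [GraphBasic, Function.Surjective, funext_iff, hentry]

theorem AlternatesOnEdges.ne_zero_of_reachable [AddGroup R] {y : V → R}
    (hy : G.AlternatesOnEdges y) {u w : V} (huw : G.Reachable u w) (hu : y u ≠ 0) : y w ≠ 0 := by
  obtain ⟨p⟩ := huw
  induction p with
  | nil => exact hu
  | cons hadj _ ih =>
    exact ih (by rwa [eq_neg_of_add_eq_zero_right (hy _ _ hadj), neg_ne_zero])

theorem AlternatesOnEdges.componentBipartite [AddCommGroup R] [LinearOrder R]
    [IsOrderedAddMonoid R] {y : V → R} (hy : G.AlternatesOnEdges y) {v : V} (hv : y v ≠ 0) :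
    ComponentBipartite G (G.connectedComponentMk v) := by
  refine ⟨fun u => decide (0 < y u), fun u w hu hadj => ?_⟩
  have hyu : y u ≠ 0 := hy.ne_zero_of_reachable (ConnectedComponent.exact hu).symm hv
  change decide _ ≠ decide _
  rw [eq_neg_of_add_eq_zero_right (hy u w hadj)]
  rcases hyu.lt_or_gt with h | h <;> simp [h, h.le]

theorem ComponentBipartite.exists_alternatesOnEdges [Ring R] [Nontrivial R]
    {C : G.ConnectedComponent} (hC : ComponentBipartite G C) :
    ∃ y : V → R, y ≠ 0 ∧ G.AlternatesOnEdges y := by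
  classical
  obtain ⟨f, hf⟩ := hC
  obtain ⟨v, rfl⟩ := C.exists_rep
  refine ⟨fun u => if G.connectedComponentMk u = G.connectedComponentMk v
    then (if f u then 1 else -1) else 0, fun h => ?_, fun u w hadj => ?_⟩
  · have := congrFun h v
    rw [if_pos rfl, Pi.zero_apply] at this
    revert this
    cases f v <;> simp
  · have hcomp : G.connectedComponentMk u = G.connectedComponentMk w :=
      ConnectedComponent.sound hadj.reachable
    dsimp only
    by_cases hu : G.connectedComponentMk u = G.connectedComponentMk v
    · have hw : G.connectedComponentMk w = G.connectedComponentMk v := hcomp.symm.trans hu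
      have hne := hf u w hu hadj
      rw [if_pos hu, if_pos hw]
      revert hne
      cases f u <;> cases f w <;> simp
    · have hw : G.connectedComponentMk w ≠ G.connectedComponentMk v := fun h => hu (hcomp.trans h)
      rw [if_neg hu, if_neg hw, add_zero]

end SimpleGraph

open SimpleGraph in
/-- A finite simple graph is basic iff no connected component of it is bipartite. -/
theorem basic_iff_no_bipartite_component {V : Type} [Fintype V] [DecidableEq V]
    (G : SimpleGraph V) [DecidableRel G.Adj] :
    GraphBasic G ↔ ∀ C : G.ConnectedComponent, ¬ ComponentBipartite G C := by
  rw [graphBasic_iff_mulVec_edgeIncMatrix_surjective, mulVec_surjective_iff_vecMul_injective,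
    ← coe_vecMulLinear, injective_iff_map_eq_zero]
  simp only [vecMulLinear_apply, vecMul_edgeIncMatrix_eq_zero_iff]
  constructor
  · intro h C hC
    obtain ⟨y, hy_ne, hy⟩ := hC.exists_alternatesOnEdges (R := ℝ)
    exact hy_ne (h y hy)
  · intro h y hy
    by_contra hy_ne
    obtain ⟨v, hv⟩ := Function.ne_iff.mp hy_ne
    exact h _ (hy.componentBipartite hv)
end

section
/- Let G be a finite simple graph that is bipartite and has at least one vertex. Then G is not basic. -/
/-- A bipartite finite simple graph with at least one vertex is not basic. -/
theorem bipartite_not_basic {V : Type} [Fintype V] [DecidableEq V] [Nonempty V]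
    (G : SimpleGraph V) [DecidableRel G.Adj]
    (hbip : ∃ f : V → Bool, ∀ u w : V, G.Adj u w → f u ≠ f w) :
    ¬ GraphBasic G := by
  obtain ⟨f, hf⟩ := hbip
  set s : V → ℝ := fun v => if f v then 1 else -1 with hs
  intro hbasic
  obtain ⟨x, hx⟩ := hbasic s
  have key : ∑ v : V, s v * (∑ e : G.edgeSet, if v ∈ (e : Sym2 V) then x e else 0) = 0 := by
    have step : ∀ v : V, s v * (∑ e : G.edgeSet, if v ∈ (e : Sym2 V) then x e else 0)
        = ∑ e : G.edgeSet, if v ∈ (e : Sym2 V) then s v * x e else 0 := by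
      intro v
      rw [Finset.mul_sum]
      exact Finset.sum_congr rfl fun e _ => by split <;> simp
    simp only [step]
    rw [Finset.sum_comm]
    apply Finset.sum_eq_zero
    rintro ⟨e, he⟩ -
    induction e with
    | h u w =>
      have hadj : G.Adj u w := he
      have hne : u ≠ w := hadj.ne
      have : ∀ v : V, (if v ∈ (s(u, w) : Sym2 V) then s v * x ⟨s(u,w), he⟩ else 0)
          = if v ∈ ({u, w} : Finset V) then s v * x ⟨s(u,w), he⟩ else 0 := by
        intro v; simp [Sym2.mem_iff]
      simp only [this]
      rw [Finset.sum_ite_mem, Finset.univ_inter, Finset.sum_pair hne]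
      have hsum : s u + s w = 0 := by
        have := hf u w hadj
        simp only [hs]
        rcases Bool.eq_false_or_eq_true (f u) with h | h <;>
          rcases Bool.eq_false_or_eq_true (f w) with h' | h' <;> simp_all
      rw [← add_mul, hsum, zero_mul]
  have key2 : ∑ v : V, s v * (∑ e : G.edgeSet, if v ∈ (e : Sym2 V) then x e else 0)
      = (Fintype.card V : ℝ) := by
    have h1 : ∀ v : V, s v * s v = 1 := by
      intro v; simp only [hs]; split <;> norm_num
    simp only [hx]
    simp [h1, Finset.card_univ]
  have hzero : (Fintype.card V : ℝ) = 0 := by rw [← key2, key]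
  have hpos : 0 < Fintype.card V := Fintype.card_pos
  simp at hzero
end

section
/- The infinite path graph, whose vertex set is ℤ and in which m and n are adjacent exactly when |m − n| = 1, is bipartite, yet it is basic: for every function b : ℤ → ℝ there exists a function x on its edges (i.e., x : ℤ → ℝ, where x(n) is the number on the edge {n, n+1}) such that for every vertex n one has x(n−1) + x(n) = b(n). -/
private def Fwd (b : ℤ → ℝ) : ℕ → ℝ
  | 0 => 0
  | n + 1 => b (n + 1) - Fwd b n

private def Bwd (b : ℤ → ℝ) : ℕ → ℝ
  | 0 => b 0
  | n + 1 => b (-(n + 1)) - Bwd b n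

private def Xfun (b : ℤ → ℝ) : ℤ → ℝ
  | Int.ofNat n => Fwd b n
  | Int.negSucc n => Bwd b n

/-- The infinite path graph on `ℤ` (vertices `m`, `n` adjacent iff `|m - n| = 1`) is
bipartite, yet it is basic: for every assignment `b` of reals to the vertices there is an
assignment `x` to the edges (`x n` being the number on the edge `{n, n+1}`) such that the
number at each vertex is the sum of the numbers on its two incident edges. -/
theorem infinite_path_bipartite_and_basic :
    (∃ f : ℤ → Bool, ∀ m n : ℤ, |m - n| = 1 → f m ≠ f n) ∧
    (∀ b : ℤ → ℝ, ∃ x : ℤ → ℝ, ∀ n : ℤ, x (n - 1) + x n = b n) := by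
  constructor
  · refine ⟨fun n => decide (n % 2 = 0), fun m n h hmn => ?_⟩
    have h1 : m - n = 1 ∨ m - n = -1 := by
      rcases abs_eq (by norm_num : (0:ℤ) ≤ 1) |>.mp h with h' | h' <;> [left; right] <;> omega
    simp only [decide_eq_decide] at hmn
    omega
  · intro b
    refine ⟨Xfun b, fun n => ?_⟩
    match n with
    | Int.ofNat 0 =>
        show Xfun b (-1) + Xfun b 0 = b 0
        have : (-1 : ℤ) = Int.negSucc 0 := rfl
        rw [this]
        show Bwd b 0 + Fwd b 0 = b 0
        simp [Bwd, Fwd]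
    | Int.ofNat (k + 1) =>
        have : (Int.ofNat (k + 1) : ℤ) - 1 = Int.ofNat k := by
          simp [Int.ofNat_eq_natCast]
        rw [this]
        show Fwd b k + Fwd b (k + 1) = b (Int.ofNat (k + 1))
        simp [Fwd, Int.ofNat_eq_natCast]
    | Int.negSucc m =>
        have : (Int.negSucc m : ℤ) - 1 = Int.negSucc (m + 1) := rfl
        rw [this]
        show Bwd b (m + 1) + Bwd b m = b (Int.negSucc m)
        have hb : (Int.negSucc m : ℤ) = -(m + 1) := by
          simp [Int.negSucc_eq]
        rw [hb]
        simp [Bwd]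
end

section
/- Let M ⊆ ℝ³ be a finite set such that for every nonempty subset S ⊆ M there exist a coordinate index i ∈ {1,2,3} and a real value c such that exactly one point of S has its i-th coordinate equal to c. Then M is basic. -/
/-!
Induct on `M`: the hypothesis gives a point `p ∈ M` lying alone on some layer `{x | x i = c}`.
Decompose `f` on `M \ {p}` by induction; then changing the `i`-th summand at the single value `c`
corrects the value at `p` without affecting any other point of `M`.
-/

/-- A set `M ⊆ ℝ³` is *basic* if every real-valued function on `M` decomposes as a sum of
functions of the three separate coordinates. -/
def IsBasic (M : Set (Fin 3 → ℝ)) : Prop :=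
  ∀ f : (Fin 3 → ℝ) → ℝ, ∃ f₁ f₂ f₃ : ℝ → ℝ,
    ∀ p ∈ M, f p = f₁ (p 0) + f₂ (p 1) + f₃ (p 2)

def IsBasicOver {ι α : Type*} [Fintype ι] (R : Type*) [AddCommMonoid R] (M : Set (ι → α)) : Prop :=
  ∀ f : (ι → α) → R, ∃ g : ι → α → R, ∀ p ∈ M, f p = ∑ i, g i (p i)

theorem sum_apply_add_single_single {ι α R : Type*} [Fintype ι] [AddCommMonoid R]
    [DecidableEq ι] [DecidableEq α] (g : ι → α → R) (i : ι) (c : α) (d : R) (q : ι → α) :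
    ∑ j, (g + Pi.single i (Pi.single c d) : ι → α → R) j (q j) =
      ∑ j, g j (q j) + (Pi.single c d : α → R) (q i) := by
  simp only [Pi.add_apply, Finset.sum_add_distrib]
  congr 1
  rw [Fintype.sum_eq_single i fun j hj ↦ by simp [hj], Pi.single_eq_same]

namespace IsBasicOver

variable {ι α R : Type*} [Fintype ι] [AddCommGroup R]

theorem empty : IsBasicOver R (∅ : Set (ι → α)) :=
  fun _ ↦ ⟨0, by simp⟩

theorem insert {M : Set (ι → α)} (hM : IsBasicOver R M) {p : ι → α} {i : ι}
    (hp : ∀ q ∈ M, q i ≠ p i) : IsBasicOver R (insert p M) := by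
  classical
  intro f
  obtain ⟨g, hg⟩ := hM f
  refine ⟨g + Pi.single i (Pi.single (p i) (f p - ∑ j, g j (p j))), ?_⟩
  rintro q (rfl | hq)
  · rw [sum_apply_add_single_single, Pi.single_eq_same, add_sub_cancel]
  · rw [sum_apply_add_single_single, Pi.single_eq_of_ne (hp q hq), add_zero, hg q hq]

theorem of_forall_exists_unique {M : Set (ι → α)} (hM : M.Finite)
    (h : ∀ S ⊆ M, S.Nonempty → ∃ (i : ι) (c : α), ∃! p, p ∈ S ∧ p i = c) :
    IsBasicOver R M := by
  classical
  lift M to Finset (ι → α) using hM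
  induction M using Finset.strongInduction with
  | H s ih =>
    rcases s.eq_empty_or_nonempty with rfl | hs
    · simpa using empty
    obtain ⟨i, _, p, ⟨hps, rfl⟩, hunique⟩ := h s subset_rfl (Finset.coe_nonempty.2 hs)
    have herase : IsBasicOver R ((s.erase p : Finset (ι → α)) : Set (ι → α)) :=
      ih _ (Finset.erase_ssubset hps) fun S hS ↦ h S (hS.trans (by simp))
    have hlone : ∀ q ∈ (s.erase p : Set (ι → α)), q i ≠ p i := fun q hq hqi ↦
      (Finset.mem_erase.1 hq).1 (hunique q ⟨(Finset.mem_erase.1 hq).2, hqi⟩)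
    have := herase.insert hlone
    rwa [← Finset.coe_insert, Finset.insert_erase hps] at this

theorem isBasic {M : Set (Fin 3 → ℝ)} (hM : IsBasicOver ℝ M) : IsBasic M := by
  intro f
  obtain ⟨g, hg⟩ := hM f
  exact ⟨g 0, g 1, g 2, fun p hp ↦ by rw [hg p hp, Fin.sum_univ_three]⟩

end IsBasicOver

/-- If every nonempty subset `S` of a finite set `M ⊆ ℝ³` has a layer containing exactly
one point of `S`, then `M` is basic. -/
theorem basic_of_layers_separate (M : Set (Fin 3 → ℝ)) (hfin : M.Finite)
    (h : ∀ S ⊆ M, S.Nonempty → ∃ (i : Fin 3) (c : ℝ), ∃! p, p ∈ S ∧ p i = c) :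
    IsBasic M :=
  (IsBasicOver.of_forall_exists_unique hfin h).isBasic
end

section
/- Let M ⊆ ℝ³ be a finite nonempty set that can be colored in two colors (i.e., there is a function χ : M → {0,1}) such that for each coordinate index i ∈ {1,2,3} and each real value c, the number of points of M of each color whose i-th coordinate equals c is the same. Then M is not basic. -/
/-- If a finite nonempty set `M ⊆ ℝ³` can be two-colored so that every layer contains
equally many points of each color, then `M` is not basic. -/
theorem not_basic_of_balanced_coloring (M : Set (Fin 3 → ℝ)) (hfin : M.Finite)
    (hne : M.Nonempty) (χ : (Fin 3 → ℝ) → Bool)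
    (hbal : ∀ (i : Fin 3) (c : ℝ),
      {p ∈ M | p i = c ∧ χ p = true}.ncard = {p ∈ M | p i = c ∧ χ p = false}.ncard) :
    ¬ IsBasic M := by
  classical
  intro hB
  obtain ⟨f₁, f₂, f₃, hf⟩ := hB (fun p => if χ p then 1 else -1)
  set S := hfin.toFinset with hSdef
  have hmemS : ∀ p, p ∈ S ↔ p ∈ M := fun p => hfin.mem_toFinset
  -- ncard of layers as finset cards
  have hcard : ∀ (i : Fin 3) (c : ℝ) (b : Bool),
      {p ∈ M | p i = c ∧ χ p = b}.ncard
        = (S.filter fun p => p i = c ∧ χ p = b).card := by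
    intro i c b
    rw [← Set.ncard_coe_finset]
    congr 1
    ext p
    simp [hmemS p]
    tauto
  -- key: fiberwise sums over colors agree
  have key : ∀ (i : Fin 3) (g : ℝ → ℝ),
      ∑ p ∈ S.filter (fun p => χ p = true), g (p i)
        = ∑ p ∈ S.filter (fun p => χ p = false), g (p i) := by
    intro i g
    have h1 : ∀ b : Bool, ∑ p ∈ S.filter (fun p => χ p = b), g (p i)
        = ∑ c ∈ S.image (fun p => p i),
            ((S.filter fun p => p i = c ∧ χ p = b).card : ℝ) * g c := by
      intro b
      rw [← Finset.sum_fiberwise_of_maps_to (g := fun p => p i)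
        (t := S.image fun p => p i)
        (fun p hp => Finset.mem_image_of_mem _ (Finset.mem_of_mem_filter p hp))]
      apply Finset.sum_congr rfl
      intro c hc
      rw [Finset.filter_filter]
      have h2 : ∑ p ∈ S.filter (fun p => χ p = b ∧ p i = c), g (p i)
          = ∑ p ∈ S.filter (fun p => χ p = b ∧ p i = c), g c := by
        apply Finset.sum_congr rfl
        intro p hp
        simp only [Finset.mem_filter] at hp
        rw [hp.2.2]
      rw [h2, Finset.sum_const, nsmul_eq_mul]
      have h3 : S.filter (fun p => χ p = b ∧ p i = c)
          = S.filter (fun p => p i = c ∧ χ p = b) := by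
        apply Finset.filter_congr
        intro p _
        constructor <;> (intro h; exact ⟨h.2, h.1⟩)
      rw [h3]
    rw [h1 true, h1 false]
    apply Finset.sum_congr rfl
    intro c _
    have hb := hbal i c
    rw [hcard i c true, hcard i c false] at hb
    rw [hb]
  -- split signed sums
  have split : ∀ g : (Fin 3 → ℝ) → ℝ,
      ∑ p ∈ S, (if χ p then (1:ℝ) else -1) * g p
        = ∑ p ∈ S.filter (fun p => χ p = true), g p
          - ∑ p ∈ S.filter (fun p => χ p = false), g p := by
    intro g
    rw [← Finset.sum_filter_add_sum_filter_not S (fun p => χ p = true)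
      (fun p => (if χ p then (1:ℝ) else -1) * g p)]
    have e1 : ∑ p ∈ S.filter (fun p => χ p = true),
        (if χ p then (1:ℝ) else -1) * g p
        = ∑ p ∈ S.filter (fun p => χ p = true), g p := by
      apply Finset.sum_congr rfl
      intro p hp
      simp only [Finset.mem_filter] at hp
      rw [hp.2]
      simp
    have e0 : S.filter (fun p => ¬ χ p = true) = S.filter (fun p => χ p = false) := by
      apply Finset.filter_congr
      intro p _
      simp
    have e2 : ∑ p ∈ S.filter (fun p => ¬ χ p = true),
        (if χ p then (1:ℝ) else -1) * g p
        = - ∑ p ∈ S.filter (fun p => χ p = false), g p := by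
      rw [e0, ← Finset.sum_neg_distrib]
      apply Finset.sum_congr rfl
      intro p hp
      simp only [Finset.mem_filter] at hp
      rw [hp.2]
      simp
    rw [e1, e2]
    ring
  have hzero : ∑ p ∈ S, (if χ p then (1:ℝ) else -1)
      * (f₁ (p 0) + f₂ (p 1) + f₃ (p 2)) = 0 := by
    have expand : ∑ p ∈ S, (if χ p then (1:ℝ) else -1)
        * (f₁ (p 0) + f₂ (p 1) + f₃ (p 2))
        = ∑ p ∈ S, (if χ p then (1:ℝ) else -1) * f₁ (p 0)
          + ∑ p ∈ S, (if χ p then (1:ℝ) else -1) * f₂ (p 1)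
          + ∑ p ∈ S, (if χ p then (1:ℝ) else -1) * f₃ (p 2) := by
      rw [← Finset.sum_add_distrib, ← Finset.sum_add_distrib]
      apply Finset.sum_congr rfl
      intro p _
      ring
    rw [expand, split (fun p => f₁ (p 0)), split (fun p => f₂ (p 1)),
      split (fun p => f₃ (p 2)), key 0 f₁, key 1 f₂, key 2 f₃]
    ring
  have hone : ∑ p ∈ S, (if χ p then (1:ℝ) else -1)
      * (f₁ (p 0) + f₂ (p 1) + f₃ (p 2)) = (S.card : ℝ) := by
    rw [Finset.sum_congr rfl (fun p hp => ?_), Finset.sum_const, nsmul_eq_mul, mul_one]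
    have hpM : p ∈ M := (hmemS p).1 hp
    rw [← hf p hpM]
    cases h : χ p <;> simp [h]
  rw [hone] at hzero
  have : S.card = 0 := by exact_mod_cast hzero
  rw [Finset.card_eq_zero] at this
  obtain ⟨p, hp⟩ := hne
  have := (hmemS p).2 hp
  simp [‹S = ∅›] at this
end

section
/- Let M ⊆ ℝ³ be a finite set. Then M is not basic if and only if there exists a function w : M → ℤ, not identically zero, such that for each coordinate index i ∈ {1,2,3} and each real value c, the sum of w over the points of M whose i-th coordinate equals c is zero. -/
/-!
The map `g ↦ (p ↦ ∑ k, g k (p k))` from triples of functions `ℝ → ℝ` to `ℝ^M` is onto exactly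
when `M` is basic. Its range is a proper subspace exactly when some nonzero `w ∈ ℝ^M` is
orthogonal to it, and testing against indicators of single values shows that this means `w`
sums to zero on every layer `{p ∈ M | p k = c}`. The layer equations have integer
coefficients, so a nonzero real solution gives a rational one (apply a `ℚ`-linear functional
`ℝ → ℚ` that does not vanish on it) and then an integral one (clear denominators).
-/

open Finset Function

variable {ι κ β : Type*}

def HasZeroLayerSums [Fintype ι] [DecidableEq β] {R : Type*} [AddCommMonoid R]
    (π : κ → ι → β) (w : ι → R) : Prop :=
  ∀ k c, ∑ p with π k p = c, w p = 0

section LayerSums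

variable [Fintype ι] [DecidableEq β] {R S : Type*} [AddCommMonoid R] [AddCommMonoid S]
  {π : κ → ι → β}

theorem HasZeroLayerSums.map {w : ι → R} (hw : HasZeroLayerSums π w) (φ : R →+ S) :
    HasZeroLayerSums π (φ ∘ w) := fun k c => by
  simp only [comp_apply, ← map_sum, hw k c, map_zero]

theorem hasZeroLayerSums_comp_iff {φ : R →+ S} (hφ : Injective φ) {w : ι → R} :
    HasZeroLayerSums π (φ ∘ w) ↔ HasZeroLayerSums π w := by
  refine ⟨fun hw k c => hφ ?_, fun hw => hw.map φ⟩
  simpa only [comp_apply, ← map_sum, map_zero] using hw k c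

theorem hasZeroLayerSums_iff_sum_mul_comp {R : Type*} [Semiring R] {w : ι → R} :
    HasZeroLayerSums π w ↔ ∀ k (g : β → R), ∑ p, w p * g (π k p) = 0 := by
  refine ⟨fun hw k g => ?_, fun hw k c => ?_⟩
  · rw [← sum_fiberwise_of_maps_to (fun p _ => mem_image_of_mem (π k) (mem_univ p))]
    refine sum_eq_zero fun c _ => ?_
    rw [sum_congr rfl fun p hp => by rw [(mem_filter.mp hp).2], ← sum_mul, hw k c, zero_mul]
  · simpa [mul_ite, sum_filter] using hw k fun b => if b = c then 1 else 0

end LayerSums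

theorem Submodule.ne_top_iff_exists_dotProduct_eq_zero {K n : Type*} [Field K] [Fintype n]
    [DecidableEq n] {V : Submodule K (n → K)} :
    V ≠ ⊤ ↔ ∃ w ≠ 0, ∀ v ∈ V, w ⬝ᵥ v = 0 := by
  constructor
  · intro hV
    obtain ⟨f, hf, hfV⟩ := V.exists_dual_map_eq_bot_of_lt_top hV.lt_top inferInstance
    refine ⟨(dotProductEquiv K n).symm f, by simpa using hf, fun v hv => ?_⟩
    have hfv : f v ∈ V.map f := mem_map_of_mem hv
    rw [hfV, mem_bot, ← (dotProductEquiv K n).apply_symm_apply f] at hfv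
    exact hfv
  · rintro ⟨w, hw, hwV⟩ rfl
    obtain ⟨v, hv⟩ := DFunLike.ne_iff.mp ((dotProductEquiv K n).map_ne_zero_iff.mpr hw)
    exact hv (hwV v trivial)

section CoordSum

variable (K : Type*) [Field K] [Fintype κ]

def coordSum (π : κ → ι → β) : (κ → β → K) →ₗ[K] (ι → K) :=
  ∑ k, LinearMap.funLeft K K (π k) ∘ₗ LinearMap.proj k

variable {K}

@[simp]
theorem coordSum_apply (π : κ → ι → β) (g : κ → β → K) (p : ι) :
    coordSum K π g p = ∑ k, g k (π k p) := by
  simp [coordSum, LinearMap.funLeft]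

variable [Fintype ι] [DecidableEq β] {π : κ → ι → β}

theorem hasZeroLayerSums_iff_forall_dotProduct_coordSum [DecidableEq κ] {w : ι → K} :
    HasZeroLayerSums π w ↔ ∀ g, w ⬝ᵥ coordSum K π g = 0 := by
  have hdot : ∀ g, w ⬝ᵥ coordSum K π g = ∑ k, ∑ p, w p * g k (π k p) := fun g => by
    simp only [dotProduct, coordSum_apply, mul_sum]
    exact sum_comm
  simp only [hdot, hasZeroLayerSums_iff_sum_mul_comp]
  refine ⟨fun hw g => sum_eq_zero fun k _ => hw k (g k), fun hw k g => ?_⟩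
  simpa [ite_apply] using hw fun k' => if k' = k then g else 0

theorem exists_hasZeroLayerSums_iff_not_surjective :
    (∃ w : ι → K, w ≠ 0 ∧ HasZeroLayerSums π w) ↔ ¬ Surjective (coordSum K π) := by
  classical
  rw [← LinearMap.range_eq_top, ← Ne, Submodule.ne_top_iff_exists_dotProduct_eq_zero]
  simp only [LinearMap.mem_range, forall_exists_index, forall_apply_eq_imp_iff,
    hasZeroLayerSums_iff_forall_dotProduct_coordSum]

end CoordSum

section Descent

variable [Fintype ι] [DecidableEq β] {π : κ → ι → β}

theorem HasZeroLayerSums.exists_rat {K : Type*} [Field K] [CharZero K] {w : ι → K}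
    (hw0 : w ≠ 0) (hw : HasZeroLayerSums π w) :
    ∃ w' : ι → ℚ, w' ≠ 0 ∧ HasZeroLayerSums π w' := by
  obtain ⟨p, hp⟩ := Function.ne_iff.mp hw0
  obtain ⟨φ, hφ⟩ := Module.Projective.exists_dual_ne_zero ℚ hp
  exact ⟨φ ∘ w, Function.ne_iff.mpr ⟨p, hφ⟩, hw.map φ.toAddMonoidHom⟩

theorem HasZeroLayerSums.exists_int {w : ι → ℚ} (hw0 : w ≠ 0) (hw : HasZeroLayerSums π w) :
    ∃ z : ι → ℤ, z ≠ 0 ∧ HasZeroLayerSums π z := by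
  obtain ⟨d, hd⟩ := IsLocalization.exist_integer_multiples (nonZeroDivisors ℤ) univ w
  choose z hz using fun p => hd p (mem_univ p)
  have hzw : Int.castAddHom ℚ ∘ z = (d : ℤ) • w := funext fun p => hz p
  refine ⟨z, ?_, ?_⟩
  · rintro rfl
    have hdw : (d : ℤ) • w = 0 := by rw [← hzw]; rfl
    exact hw0 ((smul_eq_zero.mp hdw).resolve_left (nonZeroDivisors.coe_ne_zero d))
  · rw [← hasZeroLayerSums_comp_iff (φ := Int.castAddHom ℚ) Int.cast_injective, hzw]
    exact hw.map (DistribSMul.toAddMonoidHom ℚ (d : ℤ))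

theorem exists_int_hasZeroLayerSums_iff (K : Type*) [Field K] [CharZero K] :
    (∃ z : ι → ℤ, z ≠ 0 ∧ HasZeroLayerSums π z) ↔ ∃ w : ι → K, w ≠ 0 ∧ HasZeroLayerSums π w := by
  constructor
  · rintro ⟨z, hz0, hz⟩
    obtain ⟨p, hp⟩ := Function.ne_iff.mp hz0
    exact ⟨Int.castAddHom K ∘ z, Function.ne_iff.mpr ⟨p, by simpa using hp⟩, hz.map _⟩
  · rintro ⟨w, hw0, hw⟩
    obtain ⟨w', hw'0, hw'⟩ := hw.exists_rat hw0
    exact hw'.exists_int hw'0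

end Descent

theorem finsum_mem_sep_eq_sum_filter {α R : Type*} [AddCommMonoid R] (M : Set α) [Fintype M]
    (P : α → Prop) [DecidablePred P] (f : α → R) :
    ∑ᶠ p ∈ {q ∈ M | P q}, f p = ∑ p ∈ univ.filter (fun p : M => P p), f p := by
  have hM : {q ∈ M | P q} = Subtype.val '' ((univ.filter fun p : M => P p : Finset M) : Set M) := by
    ext q; simp [and_comm]
  rw [hM, finsum_mem_image Subtype.val_injective.injOn, finsum_mem_coe_finset]

theorem isBasic_iff_surjective_coordSum (M : Set (Fin 3 → ℝ)) :
    IsBasic M ↔ Surjective (coordSum ℝ fun k (p : M) => (p : Fin 3 → ℝ) k) := by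
  classical
  constructor
  · intro hM f
    obtain ⟨f₁, f₂, f₃, hf⟩ := hM fun x => if hx : x ∈ M then f ⟨x, hx⟩ else 0
    refine ⟨![f₁, f₂, f₃], funext fun p => ?_⟩
    simpa [Fin.sum_univ_three] using (hf p p.2).symm
  · intro hM f
    obtain ⟨g, hg⟩ := hM fun p => f p
    refine ⟨g 0, g 1, g 2, fun p hp => ?_⟩
    simpa [Fin.sum_univ_three] using (congrFun hg ⟨p, hp⟩).symm

/-- A finite set `M ⊆ ℝ³` is not basic iff its points admit integer weights, not all
zero, such that the weights in every layer sum to zero. -/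
theorem not_basic_iff_weights (M : Set (Fin 3 → ℝ)) (hfin : M.Finite) :
    ¬ IsBasic M ↔ ∃ w : (Fin 3 → ℝ) → ℤ, (∃ p ∈ M, w p ≠ 0) ∧
      ∀ (i : Fin 3) (c : ℝ), (∑ᶠ p ∈ {q ∈ M | q i = c}, w p) = 0 := by
  classical
  have := hfin.fintype
  rw [isBasic_iff_surjective_coordSum, ← exists_hasZeroLayerSums_iff_not_surjective,
    ← exists_int_hasZeroLayerSums_iff]
  simp only [finsum_mem_sep_eq_sum_filter]
  constructor
  · rintro ⟨z, hz0, hz⟩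
    obtain ⟨p, hp⟩ := Function.ne_iff.mp hz0
    refine ⟨fun x => if hx : x ∈ M then z ⟨x, hx⟩ else 0, ⟨p, p.2, by simpa using hp⟩, ?_⟩
    simpa [HasZeroLayerSums] using hz
  · rintro ⟨w, ⟨p, hpM, hp⟩, hw⟩
    exact ⟨fun q => w q, Function.ne_iff.mpr ⟨⟨p, hpM⟩, hp⟩, hw⟩
end

section
/- Let a₁, …, a₂ₗ, a₂ₗ₊₁ = a₁ be a closed lightning of pairwise distinct points a₁, …, a₂ₗ lying in the layer z = 0 of ℝ³ (so for each i, aᵢ ≠ aᵢ₊₁, the x-coordinates of aᵢ and aᵢ₊₁ agree for even i and the y-coordinates agree for odd i). Color aᵢ black if i is even and white if i is odd. Let the set {a₁, …, a₂ₗ} be partitioned into pairwise disjoint subsets, each containing equally many black and white points, and let each subset P of the partition be translated by a vector (0, 0, t_P) perpendicular to the layer. Then the resulting set of translated points is not basic. -/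
/-!
The alternating weights `(-1)^i` on the translated lightning annihilate every function of a
single coordinate: along `x` and `y` the lightning pairs up consecutive points with equal
coordinate, and along `z` each part is translated as a whole and carries equally many weights
`+1` and `-1`.  Hence they annihilate every sum `f₁(x) + f₂(y) + f₃(z)`, but not the indicator
of a single point, which therefore has no such decomposition.
-/

open Finset

theorem not_isBasic_of_coord_annihilating {ι : Type*} {M : Set (Fin 3 → ℝ)} (s : Finset ι)
    (p : ι → Fin 3 → ℝ) (w : ι → ℝ) (hpM : ∀ i ∈ s, p i ∈ M) (hinj : Set.InjOn p s)
    {j : ι} (hj : j ∈ s) (hwj : w j ≠ 0)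
    (hcoord : ∀ (c : Fin 3) (g : ℝ → ℝ), ∑ i ∈ s, w i * g (p i c) = 0) :
    ¬ IsBasic M := by
  classical
  intro hM
  obtain ⟨f₁, f₂, f₃, hf⟩ := hM fun q => if q = p j then 1 else 0
  have hpoint : ∑ i ∈ s, w i * (if p i = p j then 1 else 0) = w j := by
    rw [sum_eq_single j (fun i hi hij => by rw [if_neg fun h => hij (hinj hi hj h), mul_zero])
      (absurd hj)]
    simp
  have hsplit : ∑ i ∈ s, w i * (if p i = p j then 1 else 0) = 0 := by
    rw [sum_congr rfl fun i hi => by rw [hf (p i) (hpM i hi)]]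
    simp only [mul_add, sum_add_distrib, hcoord]
    norm_num
  exact hwj (hpoint.symm.trans hsplit)

theorem sum_Icc_neg_one_pow_mul_eq_sum_range (u : ℕ → ℝ) (l : ℕ) :
    ∑ i ∈ Icc 1 (2 * l), (-1 : ℝ) ^ i * u i = ∑ k ∈ range l, (u (2 * k + 2) - u (2 * k + 1)) := by
  induction l with
  | zero => simp
  | succ n ih =>
    rw [show 2 * (n + 1) = 2 * n + 1 + 1 by ring, sum_Icc_succ_top (by omega),
      sum_Icc_succ_top (by omega), ih, sum_range_succ,
      Odd.neg_one_pow ⟨n, rfl⟩, Even.neg_one_pow ⟨n + 1, by ring⟩]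
    ring

theorem sum_Icc_neg_one_pow_mul_eq_zero_of_odd_step (u : ℕ → ℝ) (l : ℕ)
    (h : ∀ k < l, u (2 * k + 1) = u (2 * k + 2)) :
    ∑ i ∈ Icc 1 (2 * l), (-1 : ℝ) ^ i * u i = 0 := by
  rw [sum_Icc_neg_one_pow_mul_eq_sum_range]
  exact sum_eq_zero fun k hk => by rw [h k (mem_range.1 hk), sub_self]

theorem sum_Icc_neg_one_pow_mul_eq_zero_of_even_step (u : ℕ → ℝ) (l : ℕ)
    (h : ∀ k ∈ Icc 1 l, u (2 * k) = u (2 * k + 1)) (hclosed : u (2 * l + 1) = u 1) :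
    ∑ i ∈ Icc 1 (2 * l), (-1 : ℝ) ^ i * u i = 0 := by
  have hstep : ∀ k ∈ range l, u (2 * k + 2) - u (2 * k + 1) =
      u (2 * (k + 1) + 1) - u (2 * k + 1) := fun k hk => by
    rw [← h (k + 1) (mem_Icc.2 ⟨by omega, mem_range.1 hk⟩), mul_add_one]
  rw [sum_Icc_neg_one_pow_mul_eq_sum_range, sum_congr rfl hstep,
    sum_range_sub fun k => u (2 * k + 1), hclosed, sub_self]

theorem sum_neg_one_pow (s : Finset ℕ) :
    ∑ i ∈ s, (-1 : ℝ) ^ i = #(s.filter Even) - #(s.filter Odd) := by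
  rw [← sum_filter_add_sum_filter_not s Even,
    sum_congr rfl fun i hi => Even.neg_one_pow (mem_filter.1 hi).2,
    sum_congr rfl fun i hi => Odd.neg_one_pow (Nat.not_even_iff_odd.1 (mem_filter.1 hi).2)]
  simp only [sum_const, nsmul_eq_mul, mul_one, mul_neg_one, Nat.not_even_iff_odd]
  ring

theorem sum_neg_one_pow_mul_comp_eq_zero_of_balanced (s : Finset ℕ) (σ : ℕ → ℕ) (g : ℕ → ℝ)
    (hbal : ∀ k, #(s.filter fun i => σ i = k ∧ Even i) = #(s.filter fun i => σ i = k ∧ Odd i)) :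
    ∑ i ∈ s, (-1 : ℝ) ^ i * g (σ i) = 0 := by
  rw [← sum_fiberwise_of_maps_to (g := σ) fun i hi => mem_image_of_mem σ hi]
  refine sum_eq_zero fun k _ => ?_
  rw [sum_congr rfl fun i hi => by rw [(mem_filter.1 hi).2], ← sum_mul, sum_neg_one_pow,
    filter_filter, filter_filter, hbal k, sub_self, zero_mul]

theorem lightning_translates_not_basic_general (l : ℕ) (hl : 1 ≤ l) (a : ℕ → Fin 3 → ℝ)
    (hz : ∀ i ∈ Finset.Icc 1 (2 * l), a i 2 = 0)
    (hclosed : a (2 * l + 1) = a 1)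
    (hdistinct : ∀ i ∈ Finset.Icc 1 (2 * l), ∀ j ∈ Finset.Icc 1 (2 * l),
      a i = a j → i = j)
    (hx : ∀ i ∈ Finset.Icc 1 (2 * l), Even i → a i 0 = a (i + 1) 0)
    (hy : ∀ i ∈ Finset.Icc 1 (2 * l), Odd i → a i 1 = a (i + 1) 1)
    (σ : ℕ → ℕ) (t : ℕ → ℝ)
    (hbal : ∀ k : ℕ,
      ((Finset.Icc 1 (2 * l)).filter (fun i => σ i = k ∧ Even i)).card =
      ((Finset.Icc 1 (2 * l)).filter (fun i => σ i = k ∧ Odd i)).card) :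
    ¬ IsBasic ((fun i => a i + ![0, 0, t (σ i)]) '' (Set.Icc 1 (2 * l))) := by
  set b : ℕ → Fin 3 → ℝ := fun i => a i + ![0, 0, t (σ i)]
  have hb0 : ∀ i, b i 0 = a i 0 := fun i => add_zero (a i 0)
  have hb1 : ∀ i, b i 1 = a i 1 := fun i => add_zero (a i 1)
  have hb2 : ∀ i ∈ Icc 1 (2 * l), b i 2 = t (σ i) := fun i hi =>
    (congrArg (· + t (σ i)) (hz i hi)).trans (zero_add _)
  have hinj : Set.InjOn b (Icc 1 (2 * l) : Finset ℕ) := fun i hi j hj hij =>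
    hdistinct i hi j hj <| funext fun c => match c with
      | 0 => by simpa [hb0] using congrFun hij 0
      | 1 => by simpa [hb1] using congrFun hij 1
      | 2 => by rw [hz i hi, hz j hj]
  refine not_isBasic_of_coord_annihilating (Icc 1 (2 * l)) b (fun i => (-1) ^ i)
    (fun i hi => ⟨i, by simpa using hi, rfl⟩) hinj (j := 2) (by simp; omega) (by norm_num) ?_
  intro c g
  match c with
  | 0 =>
    refine sum_Icc_neg_one_pow_mul_eq_zero_of_even_step (fun i => g (b i 0)) l (fun k hk => ?_)
      (by simp only [hb0, hclosed])
    simp only [hb0, hx (2 * k) (by simp at hk ⊢; omega) (even_two_mul k)]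
  | 1 =>
    refine sum_Icc_neg_one_pow_mul_eq_zero_of_odd_step (fun i => g (b i 1)) l (fun k hk => ?_)
    simp only [hb1, hy (2 * k + 1) (by simp; omega) (odd_two_mul_add_one k)]
  | 2 =>
    rw [sum_congr rfl fun i hi => by rw [hb2 i hi]]
    exact sum_neg_one_pow_mul_comp_eq_zero_of_balanced _ σ (g ∘ t) hbal

/-- Take a closed lightning `a₁, …, a₂ₗ, a₂ₗ₊₁ = a₁` of pairwise distinct points in the
layer `z = 0`, colored black at even indices and white at odd indices.  Partition its
points into parts (the fibers of `σ` on indices), each part containing equally many black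
and white points, and translate each part `k` by the vector `(0, 0, t k)` perpendicular
to the layer.  The resulting set is not basic. -/
theorem lightning_translates_not_basic (l : ℕ) (hl : 1 ≤ l) (a : ℕ → Fin 3 → ℝ)
    (hz : ∀ i ∈ Finset.Icc 1 (2 * l), a i 2 = 0)
    (hclosed : a (2 * l + 1) = a 1)
    (hdistinct : ∀ i ∈ Finset.Icc 1 (2 * l), ∀ j ∈ Finset.Icc 1 (2 * l),
      a i = a j → i = j)
    (hne : ∀ i ∈ Finset.Icc 1 (2 * l), a i ≠ a (i + 1))
    (hx : ∀ i ∈ Finset.Icc 1 (2 * l), Even i → a i 0 = a (i + 1) 0)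
    (hy : ∀ i ∈ Finset.Icc 1 (2 * l), Odd i → a i 1 = a (i + 1) 1)
    (σ : ℕ → ℕ) (t : ℕ → ℝ)
    (hbal : ∀ k : ℕ,
      ((Finset.Icc 1 (2 * l)).filter (fun i => σ i = k ∧ Even i)).card =
      ((Finset.Icc 1 (2 * l)).filter (fun i => σ i = k ∧ Odd i)).card) :
    ¬ IsBasic ((fun i => a i + ![0, 0, t (σ i)]) '' (Set.Icc 1 (2 * l))) :=
  lightning_translates_not_basic_general l hl a hz hclosed hdistinct hx hy σ t hbal
end

section
/- Let M ⊆ ℝ³ be a finite set that is not basic, and let A, B ∈ M be two distinct points that agree in two of the three coordinates. Let v ∈ ℝ³ be a vector perpendicular to the segment AB (i.e., to B − A), let A' = A + v and B' = B + v, and suppose A' ∉ M and B' ∉ M. Then the set M' = (M \ {B}) ∪ {A', B'} is also not basic. -/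
lemma fin3_trichotomy (m : Fin 3) : m = 0 ∨ m = 1 ∨ m = 2 := by omega

lemma key_translate (M : Set (Fin 3 → ℝ)) (hM : ¬ IsBasic M) (A B : Fin 3 → ℝ)
    (hA : A ∈ M) (hAB : A ≠ B) (k : Fin 3) (hk : ∀ m, m ≠ k → A m = B m)
    (v : Fin 3 → ℝ) (hv : v k = 0) (hA' : A + v ∉ M) (hB' : B + v ∉ M) :
    ¬ IsBasic ((M \ {B}) ∪ {A + v, B + v}) := by
  intro hbasic
  apply hM
  intro f
  set g : (Fin 3 → ℝ) → ℝ :=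
    fun p => if p = B + v then f B else if p = A + v then f A else f p with hg
  obtain ⟨f₁, f₂, f₃, hdec⟩ := hbasic g
  refine ⟨f₁, f₂, f₃, ?_⟩
  have hne : A + v ≠ B + v := fun h => hAB (add_right_cancel h)
  intro p hp
  by_cases hpB : p = B
  · rw [hpB]
    have hAmem : A ∈ (M \ {B}) ∪ {A + v, B + v} := Or.inl ⟨hA, hAB⟩
    have hA'mem : A + v ∈ (M \ {B}) ∪ {A + v, B + v} := Or.inr (Set.mem_insert _ _)
    have hB'mem : B + v ∈ (M \ {B}) ∪ {A + v, B + v} := Or.inr (Set.mem_insert_of_mem _ rfl)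
    have e1 := hdec A hAmem
    have e2 := hdec (A + v) hA'mem
    have e3 := hdec (B + v) hB'mem
    have gA : g A = f A := by
      have h1 : A ≠ B + v := fun h => hB' (h ▸ hA)
      simp only [hg, if_neg h1]
      split <;> rfl
    have gA' : g (A + v) = f A := by
      simp [hg, if_neg hne]
    have gB' : g (B + v) = f B := by
      simp [hg]
    have coord : ∀ (h : ℝ → ℝ) (m : Fin 3),
        h (B m) = h ((B + v) m) - h ((A + v) m) + h (A m) := by
      intro h m
      by_cases hm : m = k
      · subst hm
        rw [Pi.add_apply, Pi.add_apply, hv, add_zero, add_zero]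
        ring
      · rw [Pi.add_apply, Pi.add_apply, hk m hm]
        ring
    rw [coord f₁ 0, coord f₂ 1, coord f₃ 2]
    rw [gA] at e1
    rw [gA'] at e2
    rw [gB'] at e3
    linarith
  · have hpmem : p ∈ (M \ {B}) ∪ {A + v, B + v} := Or.inl ⟨hp, hpB⟩
    have hd := hdec p hpmem
    have gp : g p = f p := by
      simp only [hg]
      split_ifs with h1 h2
      · exact absurd (h1 ▸ hp) hB'
      · exact absurd (h2 ▸ hp) hA'
      · rfl
    rw [gp] at hd
    exact hd

/-- If `M ⊆ ℝ³` is a finite non-basic set containing distinct points `A`, `B` agreeing in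
two of the three coordinates, and `v` is perpendicular to `B - A`, with `A + v ∉ M` and
`B + v ∉ M`, then `(M \ {B}) ∪ {A + v, B + v}` is also not basic. -/
theorem translate_pair_not_basic (M : Set (Fin 3 → ℝ)) (hfin : M.Finite)
    (hM : ¬ IsBasic M) (A B : Fin 3 → ℝ) (hA : A ∈ M) (hB : B ∈ M) (hAB : A ≠ B)
    (hagree : ∃ i j : Fin 3, i ≠ j ∧ A i = B i ∧ A j = B j)
    (v : Fin 3 → ℝ) (hperp : (∑ k : Fin 3, v k * (B k - A k)) = 0)
    (hA' : A + v ∉ M) (hB' : B + v ∉ M) :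
    ¬ IsBasic ((M \ {B}) ∪ {A + v, B + v}) := by
  obtain ⟨i, j, hij, h1, h2⟩ := hagree
  have hex : ∃ k : Fin 3, ∀ m, m ≠ k → A m = B m := by
    have tri := fin3_trichotomy
    rcases tri i with hi | hi | hi <;> rcases tri j with hj | hj | hj <;>
      subst hi <;> subst hj <;>
      first
        | exact absurd rfl hij
        | (refine ⟨0, fun m hm => ?_⟩
           rcases tri m with h | h | h <;> subst h <;>
             first | exact absurd rfl hm | assumption)
        | (refine ⟨1, fun m hm => ?_⟩
           rcases tri m with h | h | h <;> subst h <;>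
             first | exact absurd rfl hm | assumption)
        | (refine ⟨2, fun m hm => ?_⟩
           rcases tri m with h | h | h <;> subst h <;>
             first | exact absurd rfl hm | assumption)
  obtain ⟨k, hk⟩ := hex
  have hBkAk : B k ≠ A k := by
    intro h
    apply hAB
    funext m
    by_cases hm : m = k
    · subst hm; exact h.symm
    · exact hk m hm
  have hs : (∑ m : Fin 3, v m * (B m - A m)) = v k * (B k - A k) :=
    Finset.sum_eq_single k
      (fun m _ hm => by rw [hk m hm]; ring)
      (fun h => absurd (Finset.mem_univ k) h)
  have hprod : v k * (B k - A k) = 0 := hs ▸ hperp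
  have hv : v k = 0 := by
    rcases mul_eq_zero.mp hprod with h | h
    · exact h
    · exact absurd (sub_eq_zero.mp h) hBkAk
  exact key_translate M hM A B hA hAB k hk v hv hA' hB'
end

section
/- The five-point subset of the vertices of the unit cube M = {(0,0,0), (0,1,0), (1,0,0), (0,0,1), (1,1,1)} ⊆ ℝ³ is not basic. -/
lemma IsBasic.add_two_mul_eq {M : Set (Fin 3 → ℝ)} (hM : IsBasic M) (f : (Fin 3 → ℝ) → ℝ)
    {x y z x' y' z' : ℝ} (h₀ : ![x, y, z] ∈ M) (h₁ : ![x', y', z'] ∈ M)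
    (h₂ : ![x, y', z] ∈ M) (h₃ : ![x', y, z] ∈ M) (h₄ : ![x, y, z'] ∈ M) :
    f ![x', y', z'] + 2 * f ![x, y, z] = f ![x, y', z] + f ![x', y, z] + f ![x, y, z'] := by
  obtain ⟨f₁, f₂, f₃, hf⟩ := hM f
  rw [hf _ h₀, hf _ h₁, hf _ h₂, hf _ h₃, hf _ h₄]
  simp only [Matrix.cons_val_zero, Matrix.cons_val_one, Matrix.cons_val_two,
    Matrix.tail_cons, Matrix.head_cons]
  ring

/-- The five-point subset `{(0,0,0), (0,1,0), (1,0,0), (0,0,1), (1,1,1)}` of the vertices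
of the unit cube is not basic. -/
theorem five_cube_vertices_not_basic :
    ¬ IsBasic {![0, 0, 0], ![0, 1, 0], ![1, 0, 0], ![0, 0, 1], ![1, 1, 1]} := by
  intro h
  have key := h.add_two_mul_eq (fun p => if p = ![0, 0, 0] then 1 else 0)
    (x := 0) (y := 0) (z := 0) (x' := 1) (y' := 1) (z' := 1)
    (by simp) (by simp) (by simp) (by simp) (by simp)
  norm_num at key
end
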